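/- Let $N\geq 1$, $p>1$, $m\in C([0,1])$ with $m(r)\geq 0$ and $m\not\equiv 0$, and let $f\in C(\mathbb{R})$ with $f(s)s>0$ for $s\neq 0$. Let $\lambda_k^+(p)$ denote the consecutive positive eigenvalues of $(r^{N-1}\varphi_p(u'))' + \lambda r^{N-1}m(r)\varphi_p(u)=0$, $u'(0)=u(1)=0$. If $\gamma > 0$ and $\lambda_k^+(p) < \gamma f(s)/\varphi_p(s) < \lambda_{k+1}^+(p)$ for all $s\neq 0$, then the problem $(r^{N-1}\varphi_p(u'))' + \gamma r^{N-1}m(r)f(u)=0$, $u'(0)=u(1)=0$, has no nontrivial solution with exactly $k-1$ zeros nor with exactly $k$ zeros; more precisely, by Sturm comparison against the eigenvalue problems, any nontrivial solution would have a zero count strictly between those of the $k$-th and $(k+1)$-th eigenfunctions, which is impossible. -/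

import Mathlib

open MeasureTheory Set Filter

/-- `φ_p(s) = |s|^(p-2) s`. -/
noncomputable def phi (p s : ℝ) : ℝ := |s| ^ (p - 2) * s

/-- A solution of `(r^{N-1} φ_p(u'))' + F(r) = 0` on `[0,1]`, in integrated form. -/
def SolEq (p : ℝ) (N : ℕ) (F : ℝ → ℝ) (u u' : ℝ → ℝ) : Prop :=
  (∀ r ∈ Icc (0:ℝ) 1, HasDerivWithinAt u (u' r) (Icc (0:ℝ) 1) r) ∧
  ContinuousOn u' (Icc (0:ℝ) 1) ∧
  ∀ r ∈ Icc (0:ℝ) 1,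
    r ^ (N - 1) * phi p (u' r)
      = (0:ℝ) ^ (N - 1) * phi p (u' 0) - ∫ t in (0:ℝ)..r, F t

/-- `u` (with derivative `u'`) is a nontrivial solution of the eigenvalue problem
`(r^{N-1}|u'|^{p-2}u')' + λ m(r) r^{N-1} |u|^{p-2}u = 0`, `u'(0)=u(1)=0`. -/
def IsEigenfunc (p : ℝ) (N : ℕ) (m : ℝ → ℝ) (μ : ℝ) (u u' : ℝ → ℝ) : Prop :=
  SolEq p N (fun t => μ * m t * t ^ (N - 1) * phi p (u t)) u u' ∧
  u' 0 = 0 ∧ u 1 = 0 ∧ ∃ r ∈ Icc (0:ℝ) 1, u r ≠ 0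

/-!
Sturm comparison through the Picone identity. Let `y`, `z` solve
`(r^(N-1) φ_p(y'))' + F_y = 0`, `(r^(N-1) φ_p(z'))' + F_z = 0` with
`F_y y ≤ Λ |y|^p` and `Λ |z|^p ≤ F_z z`. If `z` has no zero on a hump `(a, b)` of `y`
(`y(b) = 0` and `y(a) = 0` or `a = 0`), the Picone function
`P = r^(N-1) (φ_p(y') y - φ_p(z') |y/z|^p z)` is nondecreasing there by Young's inequality,
and it tends to `0` at both ends because zeros of `z` at the ends are simple (Hopf). Hence
`P ≡ 0`, which is impossible where a comparison is strict, and this happens somewhere on the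
hump since the weight `m` cannot vanish on a whole hump of a solution. So `z` vanishes on every
hump of `y` and has more interior zeros than `y`.

With `λ_k < γ f(s)/φ_p(s) < λ_(k+1)`, the solution `u` therefore has more zeros than the
`λ_k`-eigenfunction (`k - 1` of them) and fewer than the `λ_(k+1)`-eigenfunction (`k`).
-/

open Topology

section Phi

variable {p : ℝ}

lemma phi_zero : phi p 0 = 0 := by simp [phi]

lemma phi_neg (s : ℝ) : phi p (-s) = -phi p s := by simp [phi]

lemma phi_mul (s t : ℝ) : phi p (s * t) = phi p s * phi p t := by
  simp only [phi, abs_mul, Real.mul_rpow (abs_nonneg s) (abs_nonneg t)]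
  ring

lemma phi_mul_self (hp : p ≠ 0) (s : ℝ) : phi p s * s = |s| ^ p := by
  rcases eq_or_ne s 0 with rfl | hs
  · simp [phi, Real.zero_rpow hp]
  · rw [phi, mul_assoc, ← abs_mul_abs_self s, ← mul_assoc,
      ← Real.rpow_add_one (abs_ne_zero.2 hs), ← Real.rpow_add_one (abs_ne_zero.2 hs)]
    ring_nf

lemma abs_phi (hp : p ≠ 1) (s : ℝ) : |phi p s| = |s| ^ (p - 1) := by
  rcases eq_or_ne s 0 with rfl | hs
  · simp [phi, Real.zero_rpow (sub_ne_zero.2 hp)]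
  · rw [phi, abs_mul, abs_of_nonneg (Real.rpow_nonneg (abs_nonneg s) _),
      ← Real.rpow_add_one (abs_ne_zero.2 hs)]
    ring_nf

lemma phi_pos_iff {s : ℝ} : 0 < phi p s ↔ 0 < s := by
  rcases eq_or_ne s 0 with rfl | hs
  · simp [phi]
  · exact mul_pos_iff_of_pos_left (Real.rpow_pos_of_pos (abs_pos.2 hs) _)

lemma phi_nonneg_iff {s : ℝ} : 0 ≤ phi p s ↔ 0 ≤ s := by
  simpa [phi_neg] using (phi_pos_iff (p := p) (s := -s)).not

lemma phi_nonpos_iff {s : ℝ} : phi p s ≤ 0 ↔ s ≤ 0 := by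
  simpa using (phi_pos_iff (p := p) (s := s)).not

lemma phi_eq_zero_iff {s : ℝ} : phi p s = 0 ↔ s = 0 := by
  rw [le_antisymm_iff, phi_nonpos_iff, phi_nonneg_iff, ← le_antisymm_iff]

lemma hasDerivAt_abs_rpow_eq_mul_phi (hp : 1 < p) (x : ℝ) :
    HasDerivAt (fun s : ℝ => |s| ^ p) (p * phi p x) x := by
  simpa [phi, mul_assoc] using hasDerivAt_abs_rpow x hp

lemma continuous_phi (hp : 1 < p) : Continuous (phi p) := by
  have hC1 : ContDiff ℝ 1 (fun s : ℝ => |s| ^ p) := by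
    simpa using contDiff_norm_rpow (E := ℝ) hp
  have hderiv : deriv (fun s : ℝ => |s| ^ p) = fun x => p * phi p x :=
    funext fun x => (hasDerivAt_abs_rpow_eq_mul_phi hp x).deriv
  have hcont := hC1.continuous_deriv le_rfl
  rw [hderiv] at hcont
  convert hcont.const_mul p⁻¹ using 2 with x
  field_simp [(zero_lt_one.trans hp).ne']

/-- Young's inequality `p a b ≤ a^p + (p-1) b^(p/(p-1))` with `b = |w|^(p-1)`. -/
lemma mul_phi_mul_le (hp : 1 < p) (s w : ℝ) :
    p * (phi p w * s) ≤ |s| ^ p + (p - 1) * |w| ^ p := by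
  have hp1 : 0 < p - 1 := sub_pos.2 hp
  have hyoung := Real.young_inequality_of_nonneg (abs_nonneg s)
    (Real.rpow_nonneg (abs_nonneg w) (p - 1)) (Real.HolderConjugate.conjExponent hp)
  rw [← Real.rpow_mul (abs_nonneg w), Real.conjExponent,
    mul_div_cancel₀ _ hp1.ne'] at hyoung
  calc p * (phi p w * s) ≤ p * |phi p w * s| := by gcongr; exact le_abs_self _
    _ = p * (|s| * |w| ^ (p - 1)) := by rw [abs_mul, abs_phi hp.ne', mul_comm (|w| ^ _)]
    _ ≤ p * (|s| ^ p / p + |w| ^ p / (p / (p - 1))) := by gcongr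
    _ = |s| ^ p + (p - 1) * |w| ^ p := by field_simp

lemma div_phi_mul_abs_rpow (hp : p ≠ 0) {s : ℝ} (hs : s ≠ 0) (c : ℝ) :
    c / phi p s * |s| ^ p = c * s := by
  rw [← phi_mul_self hp s]
  field_simp [phi_eq_zero_iff.not.2 hs]

lemma lt_div_phi_iff (hp : p ≠ 0) {s : ℝ} (hs : s ≠ 0) {μ c : ℝ} :
    μ < c / phi p s ↔ μ * |s| ^ p < c * s := by
  rw [← div_phi_mul_abs_rpow hp hs c,
    mul_lt_mul_iff_left₀ (Real.rpow_pos_of_pos (abs_pos.2 hs) p)]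

lemma div_phi_lt_iff (hp : p ≠ 0) {s : ℝ} (hs : s ≠ 0) {μ c : ℝ} :
    c / phi p s < μ ↔ c * s < μ * |s| ^ p := by
  rw [← div_phi_mul_abs_rpow hp hs c,
    mul_lt_mul_iff_left₀ (Real.rpow_pos_of_pos (abs_pos.2 hs) p)]

end Phi

section Calculus

variable {f f' : ℝ → ℝ} {a b : ℝ}

lemma monotoneOn_Icc_of_hasDerivAt_nonneg (hf : ContinuousOn f (Icc a b))
    (hd : ∀ x ∈ Ioo a b, HasDerivAt f (f' x) x) (h : ∀ x ∈ Ioo a b, 0 ≤ f' x) :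
    MonotoneOn f (Icc a b) :=
  monotoneOn_of_hasDerivWithinAt_nonneg (convex_Icc a b) hf
    (by simpa only [interior_Icc] using fun x hx => (hd x hx).hasDerivWithinAt)
    (by simpa only [interior_Icc] using h)

lemma antitoneOn_Icc_of_hasDerivAt_nonpos (hf : ContinuousOn f (Icc a b))
    (hd : ∀ x ∈ Ioo a b, HasDerivAt f (f' x) x) (h : ∀ x ∈ Ioo a b, f' x ≤ 0) :
    AntitoneOn f (Icc a b) :=
  antitoneOn_of_hasDerivWithinAt_nonpos (convex_Icc a b) hf
    (by simpa only [interior_Icc] using fun x hx => (hd x hx).hasDerivWithinAt)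
    (by simpa only [interior_Icc] using h)

lemma eq_of_hasDerivAt_eq_zero (hf : ContinuousOn f (Icc a b))
    (hd : ∀ x ∈ Ioo a b, HasDerivAt f 0 x) {x y : ℝ} (hx : x ∈ Icc a b)
    (hy : y ∈ Icc a b) : f x = f y := by
  have hmono := monotoneOn_Icc_of_hasDerivAt_nonneg hf hd fun _ _ => le_rfl
  have hanti := antitoneOn_Icc_of_hasDerivAt_nonpos hf hd fun _ _ => le_rfl
  rcases le_total x y with h | h
  · exact le_antisymm (hmono hx hy h) (hanti hx hy h)
  · exact le_antisymm (hanti hy hx h) (hmono hy hx h)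

lemma MonotoneOn.eq_zero_of_tendsto (hf : MonotoneOn f (Ioo a b))
    (ha : Tendsto f (𝓝[>] a) (𝓝 0)) (hb : Tendsto f (𝓝[<] b) (𝓝 0)) {r : ℝ}
    (hr : r ∈ Ioo a b) : f r = 0 := by
  apply le_antisymm
  · refine ge_of_tendsto hb ?_
    filter_upwards [Ioo_mem_nhdsLT hr.2] with x hx
    exact hf hr ⟨hr.1.trans hx.1, hx.2⟩ hx.1.le
  · refine le_of_tendsto ha ?_
    filter_upwards [Ioo_mem_nhdsGT hr.1] with x hx
    exact hf ⟨hx.1, hx.2.trans hr.2⟩ hr hx.2.le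

lemma IsPreconnected.forall_pos_or_forall_neg {s : Set ℝ} (hs : IsPreconnected s)
    (hf : ContinuousOn f s) (hne : ∀ x ∈ s, f x ≠ 0) :
    (∀ x ∈ s, 0 < f x) ∨ (∀ x ∈ s, f x < 0) := by
  by_contra! h
  obtain ⟨⟨x, hx, hfx⟩, ⟨y, hy, hfy⟩⟩ := h
  obtain ⟨c, hc, hfc⟩ := hs.intermediate_value hx hy hf ⟨hfx, hfy⟩
  exact hne c hc hfc

lemma tendsto_div_of_hasDerivWithinAt {g : ℝ → ℝ} {f₀ g₀ e : ℝ} {t : Set ℝ}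
    (hf : HasDerivWithinAt f f₀ t e) (hg : HasDerivWithinAt g g₀ t e)
    (hfe : f e = 0) (hge : g e = 0) (hg₀ : g₀ ≠ 0) :
    Tendsto (fun r => f r / g r) (𝓝[t \ {e}] e) (𝓝 (f₀ / g₀)) := by
  have hslope : ∀ {h : ℝ → ℝ} {h₀ : ℝ}, HasDerivWithinAt h h₀ t e → h e = 0 →
      Tendsto (fun r => h r / (r - e)) (𝓝[t \ {e}] e) (𝓝 h₀) := fun hh he =>
    (hasDerivWithinAt_iff_tendsto_slope.1 hh).congr fun r => by simp [slope_def_field, he]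
  refine ((hslope hf hfe).div (hslope hg hge) hg₀).congr' ?_
  filter_upwards [self_mem_nhdsWithin] with r hr
  have : r - e ≠ 0 := sub_ne_zero.2 hr.2
  simp only [Pi.div_apply]
  field_simp

end Calculus

noncomputable def flux (p : ℝ) (N : ℕ) (z' : ℝ → ℝ) (r : ℝ) : ℝ :=
  r ^ (N - 1) * phi p (z' r)

section Flux

variable {p : ℝ} {N : ℕ} {z' : ℝ → ℝ} {r : ℝ}

lemma flux_of_eq_zero (h : z' r = 0) : flux p N z' r = 0 := by simp [flux, h, phi_zero]

lemma flux_nonneg_iff (hr : 0 < r) : 0 ≤ flux p N z' r ↔ 0 ≤ z' r := by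
  rw [flux, mul_nonneg_iff_of_pos_left (pow_pos hr _), phi_nonneg_iff]

lemma flux_nonpos_iff (hr : 0 < r) : flux p N z' r ≤ 0 ↔ z' r ≤ 0 := by
  rw [flux, ← neg_nonneg, ← mul_neg, mul_nonneg_iff_of_pos_left (pow_pos hr _), neg_nonneg,
    phi_nonpos_iff]

lemma flux_eq_zero_iff (hr : 0 < r) : flux p N z' r = 0 ↔ z' r = 0 := by
  rw [le_antisymm_iff, flux_nonpos_iff hr, flux_nonneg_iff hr, ← le_antisymm_iff]

end Flux

lemma SolEq.continuousOn {p : ℝ} {N : ℕ} {F z z' : ℝ → ℝ} (h : SolEq p N F z z') :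
    ContinuousOn z (Icc 0 1) :=
  fun r hr => (h.1 r hr).continuousWithinAt

structure RadialSol (p : ℝ) (N : ℕ) (F z z' : ℝ → ℝ) : Prop where
  solEq : SolEq p N F z z'
  continuousOn_forcing : ContinuousOn F (Icc 0 1)
  deriv_zero : z' 0 = 0

namespace RadialSol

variable {p : ℝ} {N : ℕ} {F z z' : ℝ → ℝ} {r a b : ℝ}

lemma hasDerivWithinAt (S : RadialSol p N F z z') (hr : r ∈ Icc 0 1) :
    HasDerivWithinAt z (z' r) (Icc 0 1) r :=
  S.solEq.1 r hr

lemma continuousOn (S : RadialSol p N F z z') : ContinuousOn z (Icc 0 1) :=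
  S.solEq.continuousOn

lemma hasDerivAt (S : RadialSol p N F z z') (hr : r ∈ Ioo 0 1) : HasDerivAt z (z' r) r :=
  (S.hasDerivWithinAt (Ioo_subset_Icc_self hr)).hasDerivAt (Icc_mem_nhds hr.1 hr.2)

lemma flux_zero (S : RadialSol p N F z z') : flux p N z' 0 = 0 := flux_of_eq_zero S.deriv_zero

lemma continuousOn_flux (S : RadialSol p N F z z') (hp : 1 < p) :
    ContinuousOn (flux p N z') (Icc 0 1) :=
  (continuousOn_pow _).mul ((continuous_phi hp).comp_continuousOn S.solEq.2.1)

lemma flux_eq_neg_integral (S : RadialSol p N F z z') (hr : r ∈ Icc 0 1) :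
    flux p N z' r = -∫ t in (0:ℝ)..r, F t := by
  have h := S.solEq.2.2 r hr
  rwa [S.deriv_zero, phi_zero, mul_zero, zero_sub] at h

lemma hasDerivAt_flux (S : RadialSol p N F z z') (hr : r ∈ Ioo 0 1) :
    HasDerivAt (flux p N z') (-F r) r := by
  have hF := S.continuousOn_forcing
  have hint : HasDerivAt (fun x => ∫ t in (0:ℝ)..x, F t) (F r) r :=
    intervalIntegral.integral_hasDerivAt_right
      (hF.mono (by rw [uIcc_of_le hr.1.le]; exact Icc_subset_Icc le_rfl hr.2.le)).intervalIntegrable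
      ((hF.mono Ioo_subset_Icc_self).stronglyMeasurableAtFilter isOpen_Ioo r hr)
      ((hF r (Ioo_subset_Icc_self hr)).continuousAt (Icc_mem_nhds hr.1 hr.2))
  refine hint.neg.congr_of_eventuallyEq ?_
  filter_upwards [Icc_mem_nhds hr.1 hr.2] with x hx using S.flux_eq_neg_integral hx

lemma neg (S : RadialSol p N F z z') :
    RadialSol p N (fun t => -F t) (fun t => -z t) (fun t => -z' t) where
  solEq := by
    refine ⟨fun r hr => (S.hasDerivWithinAt hr).neg, S.solEq.2.1.neg, fun r hr => ?_⟩
    simp only [phi_neg, intervalIntegral.integral_neg, S.deriv_zero, neg_zero, phi_zero, mul_zero,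
      zero_sub, mul_neg, neg_inj]
    exact S.flux_eq_neg_integral hr
  continuousOn_forcing := S.continuousOn_forcing.neg
  deriv_zero := by simp [S.deriv_zero]

/-- Hopf-type lemma: the flux is antitone, so a double zero at an endpoint would force `z ≤ 0`
inside. -/
lemma deriv_ne_zero_of_pos (S : RadialSol p N F z z') (hp : 1 < p) (ha : 0 ≤ a) (hb : b ≤ 1)
    (hab : a < b) (hz : ∀ r ∈ Ioo a b, 0 < z r) (hF : ∀ r ∈ Ioo a b, 0 ≤ F r) :
    (z a = 0 → z' a ≠ 0) ∧ (z b = 0 → z' b ≠ 0) := by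
  have hsub : Icc a b ⊆ Icc 0 1 := Icc_subset_Icc ha hb
  have hsubo : Ioo a b ⊆ Ioo 0 1 := Ioo_subset_Ioo ha hb
  have hflux : AntitoneOn (flux p N z') (Icc a b) :=
    antitoneOn_Icc_of_hasDerivAt_nonpos ((S.continuousOn_flux hp).mono hsub)
      (fun r hr => S.hasDerivAt_flux (hsubo hr)) fun r hr => neg_nonpos.2 (hF r hr)
  have hmid : (a + b) / 2 ∈ Ioo a b := ⟨by linarith, by linarith⟩
  have haI : a ∈ Icc a b := left_mem_Icc.2 hab.le
  have hbI : b ∈ Icc a b := right_mem_Icc.2 hab.le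
  constructor
  · intro hza hz'a
    have hanti : AntitoneOn z (Icc a b) :=
      antitoneOn_Icc_of_hasDerivAt_nonpos (S.continuousOn.mono hsub)
        (fun r hr => S.hasDerivAt (hsubo hr)) fun r hr =>
          (flux_nonpos_iff (ha.trans_lt hr.1)).1
            ((hflux haI (Ioo_subset_Icc_self hr) hr.1.le).trans_eq (flux_of_eq_zero hz'a))
    exact (hz _ hmid).not_ge ((hanti haI (Ioo_subset_Icc_self hmid) hmid.1.le).trans_eq hza)
  · intro hzb hz'b
    have hmono : MonotoneOn z (Icc a b) :=
      monotoneOn_Icc_of_hasDerivAt_nonneg (S.continuousOn.mono hsub)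
        (fun r hr => S.hasDerivAt (hsubo hr)) fun r hr =>
          (flux_nonneg_iff (ha.trans_lt hr.1)).1
            ((flux_of_eq_zero hz'b).symm.trans_le (hflux (Ioo_subset_Icc_self hr) hbI hr.2.le))
    exact (hz _ hmid).not_ge ((hmono (Ioo_subset_Icc_self hmid) hbI hmid.2.le).trans_eq hzb)

lemma deriv_ne_zero_of_ne_zero (S : RadialSol p N F z z') (hp : 1 < p) (ha : 0 ≤ a)
    (hb : b ≤ 1) (hab : a < b) (hz : ∀ r ∈ Ioo a b, z r ≠ 0)
    (hFz : ∀ r ∈ Ioo a b, 0 ≤ F r * z r) :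
    (z a = 0 → z' a ≠ 0) ∧ (z b = 0 → z' b ≠ 0) := by
  rcases isPreconnected_Ioo.forall_pos_or_forall_neg
    (S.continuousOn.mono (Ioo_subset_Icc_self.trans (Icc_subset_Icc ha hb))) hz with hpos | hneg
  · exact S.deriv_ne_zero_of_pos hp ha hb hab hpos fun r hr =>
      nonneg_of_mul_nonneg_left (hFz r hr) (hpos r hr)
  · simpa using S.neg.deriv_ne_zero_of_pos hp ha hb hab (fun r hr => neg_pos.2 (hneg r hr))
      fun r hr => neg_nonneg.2 (nonpos_of_mul_nonneg_left (hFz r hr) (hneg r hr))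

/-- Otherwise the flux is constant on the hump, equal to its value `0` at a critical point of `z`
(`z'(0) = 0`, or Rolle), so `z' = 0` there and `z ≡ z(b) = 0`. -/
lemma exists_forcing_ne_zero (S : RadialSol p N F z z') (hp : 1 < p) (ha : 0 ≤ a) (hb : b ≤ 1)
    (hab : a < b) (hza : a = 0 ∨ z a = 0) (hzb : z b = 0) (hz : ∀ r ∈ Ioo a b, z r ≠ 0) :
    ∃ r ∈ Ioo a b, F r ≠ 0 := by
  by_contra! hF
  have hsub : Icc a b ⊆ Icc 0 1 := Icc_subset_Icc ha hb
  have hsubo : Ioo a b ⊆ Ioo 0 1 := Ioo_subset_Ioo ha hb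
  obtain ⟨c, hc, hz'c⟩ : ∃ c ∈ Icc a b, z' c = 0 := by
    rcases hza with rfl | hza
    · exact ⟨0, left_mem_Icc.2 hab.le, S.deriv_zero⟩
    · obtain ⟨c, hc, hz'c⟩ := exists_hasDerivAt_eq_zero hab (S.continuousOn.mono hsub)
        (hza.trans hzb.symm) fun r hr => S.hasDerivAt (hsubo hr)
      exact ⟨c, Ioo_subset_Icc_self hc, hz'c⟩
  have hz' : ∀ r ∈ Ioo a b, z' r = 0 := fun r hr =>
    (flux_eq_zero_iff (ha.trans_lt hr.1)).1 <|
      (eq_of_hasDerivAt_eq_zero ((S.continuousOn_flux hp).mono hsub)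
        (fun x hx => by simpa [hF x hx] using S.hasDerivAt_flux (hsubo hx))
        (Ioo_subset_Icc_self hr) hc).trans (flux_of_eq_zero hz'c)
  have hmid : (a + b) / 2 ∈ Ioo a b := ⟨by linarith, by linarith⟩
  refine hz _ hmid ((eq_of_hasDerivAt_eq_zero (S.continuousOn.mono hsub) (fun x hx => ?_)
    (Ioo_subset_Icc_self hmid) (right_mem_Icc.2 hab.le)).trans hzb)
  simpa [hz' x hx] using S.hasDerivAt (hsubo hx)

end RadialSol

noncomputable def picone (p : ℝ) (N : ℕ) (y y' z z' : ℝ → ℝ) (r : ℝ) : ℝ :=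
  flux p N y' r * y r - flux p N z' r * (|y r / z r| ^ p * z r)

section Picone

variable {p : ℝ} {N : ℕ} {Fy Fz y y' z z' : ℝ → ℝ} {r : ℝ}

lemma hasDerivAt_picone (hp : 1 < p) (Sy : RadialSol p N Fy y y') (Sz : RadialSol p N Fz z z')
    (hr : r ∈ Ioo 0 1) (hz : z r ≠ 0) :
    HasDerivAt (picone p N y y' z z')
      ((Fz r * z r * |y r / z r| ^ p - Fy r * y r) + r ^ (N - 1) *
        (|y' r| ^ p - p * (phi p (y r / z r * z' r) * y' r)
          + (p - 1) * |y r / z r * z' r| ^ p)) r := by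
  have hp0 : p ≠ 0 := by linarith
  have hq := (Sy.hasDerivAt hr).div (Sz.hasDerivAt hr) hz
  have hD := ((Sy.hasDerivAt_flux hr).mul (Sy.hasDerivAt hr)).sub ((Sz.hasDerivAt_flux hr).mul
    (((hasDerivAt_abs_rpow_eq_mul_phi hp _).comp r hq).mul (Sz.hasDerivAt hr)))
  refine hD.congr_deriv ?_
  simp only [flux, Function.comp_apply, Pi.div_apply, Pi.mul_apply]
  set q := y r / z r with hq_def
  rw [← phi_mul_self hp0 (q * z' r), phi_mul, ← phi_mul_self hp0 q, ← phi_mul_self hp0 (y' r)]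
  have hy : y r = q * z r := by rw [hq_def]; field_simp
  rw [hy]
  field_simp
  ring

/-- The first part of the derivative is controlled by the comparison of the forcings, the second
is `r^(N-1)` times the defect in Young's inequality. -/
lemma exists_hasDerivAt_picone (hp : 1 < p) (Sy : RadialSol p N Fy y y')
    (Sz : RadialSol p N Fz z z') (hr : r ∈ Ioo 0 1) (hy : y r ≠ 0) (hz : z r ≠ 0) {Λ : ℝ}
    (hFy : Fy r * y r ≤ Λ * |y r| ^ p) (hFz : Λ * |z r| ^ p ≤ Fz r * z r) :
    ∃ d, HasDerivAt (picone p N y y' z z') d r ∧ 0 ≤ d ∧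
      (Fy r * y r < Λ * |y r| ^ p ∨ Λ * |z r| ^ p < Fz r * z r → 0 < d) := by
  refine ⟨_, hasDerivAt_picone hp Sy Sz hr hz, ?_⟩
  set q := y r / z r with hq_def
  have hq : 0 < |q| ^ p := Real.rpow_pos_of_pos (abs_pos.2 (div_ne_zero hy hz)) p
  have hyq : Λ * |y r| ^ p = Λ * |z r| ^ p * |q| ^ p := by
    rw [mul_assoc, ← Real.mul_rpow (abs_nonneg _) (abs_nonneg _), ← abs_mul, hq_def,
      mul_div_cancel₀ _ hz]
  have hyoung := mul_phi_mul_le hp (y' r) (q * z' r)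
  have hG : 0 ≤ r ^ (N - 1) * (|y' r| ^ p - p * (phi p (q * z' r) * y' r)
      + (p - 1) * |q * z' r| ^ p) := mul_nonneg (pow_nonneg hr.1.le _) (by linarith)
  have hcomp : Λ * |y r| ^ p ≤ Fz r * z r * |q| ^ p := by
    rw [hyq]; exact mul_le_mul_of_nonneg_right hFz hq.le
  refine ⟨by linarith, fun h => ?_⟩
  rcases h with h | h
  · linarith
  · have : Λ * |y r| ^ p < Fz r * z r * |q| ^ p := by
      rw [hyq]; exact mul_lt_mul_of_pos_right h hq
    linarith

/-- `y/z` has a finite limit at `e`, since either `z(e) ≠ 0` or `z(e) = 0` is a simple zero; at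
`e = 0` both fluxes vanish instead. -/
lemma tendsto_picone (hp : 1 < p) (Sy : RadialSol p N Fy y y') (Sz : RadialSol p N Fz z z')
    {e : ℝ} {s : Set ℝ} (he : e ∈ Icc 0 1) (hs : s ⊆ Icc 0 1 \ {e})
    (h : (y e = 0 ∧ (z e = 0 → z' e ≠ 0)) ∨ (e = 0 ∧ z e ≠ 0)) :
    Tendsto (picone p N y y' z z') (𝓝[s] e) (𝓝 0) := by
  have hlim : ∀ {g : ℝ → ℝ}, ContinuousOn g (Icc 0 1) →
      Tendsto g (𝓝[s] e) (𝓝 (g e)) :=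
    fun hg => ((hg e he).mono (hs.trans sdiff_subset)).tendsto
  obtain ⟨ℓ, hq, hℓ⟩ : ∃ ℓ, Tendsto (fun r => y r / z r) (𝓝[s] e) (𝓝 ℓ) ∧
      flux p N y' e * y e - flux p N z' e * (|ℓ| ^ p * z e) = 0 := by
    rcases h with ⟨hye, hz'e⟩ | ⟨rfl, hze⟩
    · by_cases hze : z e = 0
      · refine ⟨y' e / z' e, ?_, by simp [hye, hze]⟩
        exact (tendsto_div_of_hasDerivWithinAt (Sy.hasDerivWithinAt he) (Sz.hasDerivWithinAt he)
          hye hze (hz'e hze)).mono_left (nhdsWithin_mono _ hs)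
      · exact ⟨y e / z e, (hlim Sy.continuousOn).div (hlim Sz.continuousOn) hze,
          by simp [hye, Real.zero_rpow (zero_lt_one.trans hp).ne']⟩
    · exact ⟨y 0 / z 0, (hlim Sy.continuousOn).div (hlim Sz.continuousOn) hze,
        by simp [Sy.flux_zero, Sz.flux_zero]⟩
  have := ((hlim (Sy.continuousOn_flux hp)).mul (hlim Sy.continuousOn)).sub
    ((hlim (Sz.continuousOn_flux hp)).mul
      ((hq.abs.rpow_const (Or.inr (zero_lt_one.trans hp).le)).mul (hlim Sz.continuousOn)))
  rwa [hℓ] at this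

end Picone

namespace RadialSol

variable {p : ℝ} {N : ℕ} {Fy Fz y y' z z' : ℝ → ℝ} {a b : ℝ}

theorem exists_zero_of_hump (hp : 1 < p) (Sy : RadialSol p N Fy y y')
    (Sz : RadialSol p N Fz z z') {Λ : ℝ → ℝ} (ha : 0 ≤ a) (hb : b ≤ 1) (hab : a < b)
    (hya : a = 0 ∨ y a = 0) (hyb : y b = 0) (hy : ∀ r ∈ Ioo a b, y r ≠ 0)
    (hΛ : ∀ r ∈ Ioo a b, 0 ≤ Λ r)
    (hFy : ∀ r ∈ Ioo a b, Fy r * y r ≤ Λ r * |y r| ^ p)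
    (hFz : ∀ r ∈ Ioo a b, Λ r * |z r| ^ p ≤ Fz r * z r)
    (hstrict : ∃ r ∈ Ioo a b, Fy r * y r < Λ r * |y r| ^ p ∨ Λ r * |z r| ^ p < Fz r * z r) :
    ∃ r ∈ Ioo a b, z r = 0 := by
  by_contra! hz
  have hsubo : Ioo a b ⊆ Ioo 0 1 := Ioo_subset_Ioo ha hb
  have hsub : Ioo a b ⊆ Icc 0 1 := hsubo.trans Ioo_subset_Icc_self
  obtain ⟨hz'a, hz'b⟩ := Sz.deriv_ne_zero_of_ne_zero hp ha hb hab hz fun r hr =>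
    (mul_nonneg (hΛ r hr) (Real.rpow_nonneg (abs_nonneg _) p)).trans (hFz r hr)
  choose! d hd hd0 hdpos using fun r (hr : r ∈ Ioo a b) =>
    exists_hasDerivAt_picone hp Sy Sz (hsubo hr) (hy r hr) (hz r hr) (hFy r hr) (hFz r hr)
  have hmono : MonotoneOn (picone p N y y' z z') (Ioo a b) :=
    monotoneOn_of_hasDerivWithinAt_nonneg (convex_Ioo a b)
      (fun r hr => (hd r hr).continuousAt.continuousWithinAt)
      (by simpa only [interior_Ioo] using fun r hr => (hd r hr).hasDerivWithinAt)
      (by simpa only [interior_Ioo] using hd0)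
  have hlima : Tendsto (picone p N y y' z z') (𝓝[>] a) (𝓝 0) := by
    rw [← nhdsWithin_Ioo_eq_nhdsGT hab]
    refine tendsto_picone hp Sy Sz ⟨ha, hab.le.trans hb⟩
      (fun r hr => ⟨hsub hr, hr.1.ne'⟩) ?_
    rcases hya with rfl | hya
    · exact Or.inr ⟨rfl, fun h => hz'a h Sz.deriv_zero⟩
    · exact Or.inl ⟨hya, hz'a⟩
  have hlimb : Tendsto (picone p N y y' z z') (𝓝[<] b) (𝓝 0) := by
    rw [← nhdsWithin_Ioo_eq_nhdsLT hab]
    exact tendsto_picone hp Sy Sz ⟨ha.trans hab.le, hb⟩ (fun r hr => ⟨hsub hr, hr.2.ne⟩)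
      (Or.inl ⟨hyb, hz'b⟩)
  obtain ⟨r₀, hr₀, hstrict₀⟩ := hstrict
  have hconst : HasDerivAt (picone p N y y' z z') 0 r₀ := by
    refine (hasDerivAt_const r₀ (0 : ℝ)).congr_of_eventuallyEq ?_
    filter_upwards [Ioo_mem_nhds hr₀.1 hr₀.2] with r hr
    exact hmono.eq_zero_of_tendsto hlima hlimb hr
  exact (hdpos r₀ hr₀ hstrict₀).ne' ((hd r₀ hr₀).unique hconst)

end RadialSol

lemma Set.ncard_le_of_forall_exists_between {α : Type*} [LinearOrder α] {S T : Set α}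
    (hT : T.Finite) (h : ∀ a ∈ S, ∃ t ∈ T, a < t ∧ ∀ s ∈ S, a < s → t < s) :
    S.ncard ≤ T.ncard := by
  choose! g hgT hlt hnext using h
  refine ncard_le_ncard_of_injOn g hgT (fun a ha b hb hab => ?_) hT
  by_contra hne
  rcases lt_or_gt_of_ne hne with h | h
  · exact ((hnext a ha b hb h).trans (hlt b hb)).ne hab
  · exact ((hnext b hb a ha h).trans (hlt a ha)).ne hab.symm

lemma ncard_add_one_le_of_forall_gap {Y Z : Set ℝ} (hY : Y.Finite) (hZ : Z.Finite)
    (hY01 : Y ⊆ Ioo 0 1)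
    (h : ∀ a b, (a = 0 ∨ a ∈ Y) → (b = 1 ∨ b ∈ Y) → a < b →
      (∀ r ∈ Ioo a b, r ∉ Y) → ∃ r ∈ Ioo a b, r ∈ Z) :
    Y.ncard + 1 ≤ Z.ncard := by
  have h0 : (0 : ℝ) ∉ Y := fun h => (hY01 h).1.false
  rw [← ncard_insert_of_notMem h0 hY]
  refine Set.ncard_le_of_forall_exists_between hZ fun a ha => ?_
  have ha' : a = 0 ∨ a ∈ Y := ha
  have ha0 : 0 ≤ a := ha'.elim (·.ge) fun h => (hY01 h).1.le
  have ha1 : a < 1 := ha'.elim (· ▸ zero_lt_one) fun h => (hY01 h).2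
  obtain ⟨b, ⟨hbY, hab⟩, hbmin⟩ := exists_min_image (insert 1 Y ∩ Ioi a) id
    ((hY.insert 1).inter_of_left _) ⟨1, mem_insert _ _, ha1⟩
  obtain ⟨t, ht, htZ⟩ := h a b ha' hbY hab fun r hr hrY =>
    (hbmin r ⟨Or.inr hrY, hr.1⟩).not_gt hr.2
  refine ⟨t, htZ, ht.1, fun s hs has => ht.2.trans_le (hbmin s ⟨?_, has⟩)⟩
  rcases hs with rfl | hs
  · exact absurd has ha0.not_gt
  · exact Or.inr hs

theorem RadialSol.ncard_zeros_add_one_le {p μ : ℝ} {N : ℕ} {ρ gy gz y y' z z' : ℝ → ℝ}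
    (hp : 1 < p) (Sy : RadialSol p N (fun r => ρ r * gy (y r)) y y')
    (Sz : RadialSol p N (fun r => ρ r * gz (z r)) z z') (hy1 : y 1 = 0)
    (hyfin : {r ∈ Ioo (0:ℝ) 1 | y r = 0}.Finite)
    (hzfin : {r ∈ Ioo (0:ℝ) 1 | z r = 0}.Finite)
    (hμ : 0 ≤ μ) (hρ : ∀ r ∈ Ioo (0:ℝ) 1, 0 ≤ ρ r)
    (hgy : ∀ s ≠ 0, gy s * s ≤ μ * |s| ^ p) (hgz : ∀ s ≠ 0, μ * |s| ^ p ≤ gz s * s)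
    (hstrict : (∀ s ≠ 0, gy s * s < μ * |s| ^ p) ∨ (∀ s ≠ 0, μ * |s| ^ p < gz s * s)) :
    {r ∈ Ioo (0:ℝ) 1 | y r = 0}.ncard + 1 ≤ {r ∈ Ioo (0:ℝ) 1 | z r = 0}.ncard := by
  refine ncard_add_one_le_of_forall_gap hyfin hzfin (sep_subset _ _) fun a b ha hb hab hgap => ?_
  have ha0 : 0 ≤ a := ha.elim (·.ge) fun h => h.1.1.le
  have hb1 : b ≤ 1 := hb.elim (·.le) fun h => h.1.2.le
  have hsub : Ioo a b ⊆ Ioo 0 1 := Ioo_subset_Ioo ha0 hb1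
  have hy : ∀ r ∈ Ioo a b, y r ≠ 0 := fun r hr h => hgap r hr ⟨hsub hr, h⟩
  have hya : a = 0 ∨ y a = 0 := ha.imp_right And.right
  have hyb : y b = 0 := hb.elim (· ▸ hy1) And.right
  obtain ⟨r₀, hr₀, hF₀⟩ := Sy.exists_forcing_ne_zero hp ha0 hb1 hab hya hyb hy
  have hρ₀ : 0 < ρ r₀ := (hρ r₀ (hsub hr₀)).lt_of_ne' (left_ne_zero_of_mul hF₀)
  by_cases hz₀ : z r₀ = 0
  · exact ⟨r₀, hr₀, hsub hr₀, hz₀⟩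
  have hFz : ∀ r ∈ Ioo a b, μ * ρ r * |z r| ^ p ≤ ρ r * gz (z r) * z r := fun r hr => by
    rcases eq_or_ne (z r) 0 with h | h
    · simp [h, Real.zero_rpow (zero_lt_one.trans hp).ne']
    · linarith [mul_le_mul_of_nonneg_left (hgz (z r) h) (hρ r (hsub hr))]
  obtain ⟨r, hr, hzr⟩ := Sy.exists_zero_of_hump hp Sz ha0 hb1 hab hya hyb hy
    (fun r hr => mul_nonneg hμ (hρ r (hsub hr)))
    (fun r hr => by linarith [mul_le_mul_of_nonneg_left (hgy (y r) (hy r hr)) (hρ r (hsub hr))])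
    hFz ⟨r₀, hr₀, hstrict.imp
      (fun h => by linarith [mul_lt_mul_of_pos_left (h (y r₀) (hy r₀ hr₀)) hρ₀])
      (fun h => by linarith [mul_lt_mul_of_pos_left (h (z r₀) hz₀) hρ₀])⟩
  exact ⟨r, hr, hsub hr, hzr⟩

lemma IsEigenfunc.radialSol {p μ : ℝ} {N : ℕ} {m u u' : ℝ → ℝ} (hp : 1 < p)
    (hm : ContinuousOn m (Icc 0 1)) (h : IsEigenfunc p N m μ u u') :
    RadialSol p N (fun r => r ^ (N - 1) * m r * (μ * phi p (u r))) u u' where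
  solEq := by convert h.1 using 2 with r; ring
  continuousOn_forcing := ((continuousOn_pow _).mul hm).mul
    (continuousOn_const.mul ((continuous_phi hp).comp_continuousOn h.1.continuousOn))
  deriv_zero := h.2.1

theorem nonexistence_between_eigenvalues_general
    (p : ℝ) (hp : 1 < p) (N : ℕ)
    (m : ℝ → ℝ) (hm : ContinuousOn m (Icc (0:ℝ) 1))
    (hmnonneg : ∀ r ∈ Icc (0:ℝ) 1, 0 ≤ m r)
    (f : ℝ → ℝ) (hf : Continuous f)
    (k : ℕ) (lamk lamk1 : ℝ) (hlamkpos : 0 < lamk)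
    (hlamk : ∃ u u' : ℝ → ℝ, IsEigenfunc p N m lamk u u' ∧
      {r ∈ Ioo (0:ℝ) 1 | u r = 0}.Finite ∧
      {r ∈ Ioo (0:ℝ) 1 | u r = 0}.ncard = k - 1)
    (hlamk1 : ∃ u u' : ℝ → ℝ, IsEigenfunc p N m lamk1 u u' ∧
      {r ∈ Ioo (0:ℝ) 1 | u r = 0}.Finite ∧
      {r ∈ Ioo (0:ℝ) 1 | u r = 0}.ncard = k)
    (γ : ℝ)
    (hbetween : ∀ s : ℝ, s ≠ 0 →
      lamk < γ * f s / phi p s ∧ γ * f s / phi p s < lamk1) :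
    ¬ ∃ u u' : ℝ → ℝ,
        (SolEq p N (fun t => γ * t ^ (N - 1) * m t * f (u t)) u u' ∧
          u' 0 = 0 ∧ u 1 = 0 ∧ ∃ r ∈ Icc (0:ℝ) 1, u r ≠ 0) ∧
        {r ∈ Ioo (0:ℝ) 1 | u r = 0}.Finite ∧
        ({r ∈ Ioo (0:ℝ) 1 | u r = 0}.ncard = k - 1 ∨
          {r ∈ Ioo (0:ℝ) 1 | u r = 0}.ncard = k) := by
  rintro ⟨u, u', ⟨hu, hu'0, hu1, -⟩, hufin, hucard⟩
  have hp0 : p ≠ 0 := by linarith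
  have hρ : ∀ r ∈ Ioo (0:ℝ) 1, 0 ≤ r ^ (N - 1) * m r := fun r hr =>
    mul_nonneg (pow_nonneg hr.1.le _) (hmnonneg r (Ioo_subset_Icc_self hr))
  have Su : RadialSol p N (fun r => r ^ (N - 1) * m r * (γ * f (u r))) u u' :=
    ⟨by convert hu using 2 with r; ring, ((continuousOn_pow _).mul hm).mul
      (continuousOn_const.mul (hf.comp_continuousOn hu.continuousOn)), hu'0⟩
  have hlow : ∀ s ≠ 0, lamk * |s| ^ p < γ * f s * s := fun s hs =>
    (lt_div_phi_iff hp0 hs).1 (hbetween s hs).1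
  have hup : ∀ s ≠ 0, γ * f s * s < lamk1 * |s| ^ p := fun s hs =>
    (div_phi_lt_iff hp0 hs).1 (hbetween s hs).2
  have heig : ∀ μ s, μ * phi p s * s = μ * |s| ^ p := fun μ s => by
    rw [mul_assoc, phi_mul_self hp0]
  rcases hucard with hcard | hcard
  · obtain ⟨w, w', hw, hwfin, hwcard⟩ := hlamk
    have hcount := (hw.radialSol hp hm).ncard_zeros_add_one_le (gy := fun s => lamk * phi p s)
      (gz := fun s => γ * f s) hp Su hw.2.2.1 hwfin hufin hlamkpos.le hρ
      (fun s _ => (heig lamk s).le) (fun s hs => (hlow s hs).le) (Or.inr hlow)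
    omega
  · obtain ⟨v, v', hv, hvfin, hvcard⟩ := hlamk1
    have hlamk1_nonneg : 0 ≤ lamk1 := by linarith [hbetween 1 one_ne_zero]
    have hcount := Su.ncard_zeros_add_one_le (gy := fun s => γ * f s)
      (gz := fun s => lamk1 * phi p s) hp (hv.radialSol hp hm) hu1 hufin hvfin hlamk1_nonneg hρ
      (fun s hs => (hup s hs).le) (fun s _ => (heig lamk1 s).ge) (Or.inl hup)
    omega

/-- Nonexistence observation (Section 4): if `m ≥ 0` and the nonlinearity
`γ f(s)/φ_p(s)` stays strictly between the consecutive positive eigenvalues `λ_k` and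
`λ_{k+1}` (whose eigenfunctions have exactly `k-1`, resp. `k`, zeros), then the problem
has no nontrivial solution with exactly `k-1` zeros nor with exactly `k` zeros. -/
theorem nonexistence_between_eigenvalues
    (p : ℝ) (hp : 1 < p) (N : ℕ) (hN : 1 ≤ N)
    (m : ℝ → ℝ) (hm : ContinuousOn m (Icc (0:ℝ) 1))
    (hmnonneg : ∀ r ∈ Icc (0:ℝ) 1, 0 ≤ m r)
    (hmne : ∃ r ∈ Icc (0:ℝ) 1, m r ≠ 0)
    (f : ℝ → ℝ) (hf : Continuous f) (hsign : ∀ s : ℝ, s ≠ 0 → 0 < f s * s)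
    (k : ℕ) (hk : 1 ≤ k) (lamk lamk1 : ℝ) (hlamkpos : 0 < lamk)
    (hlamk : ∃ u u' : ℝ → ℝ, IsEigenfunc p N m lamk u u' ∧
      {r ∈ Ioo (0:ℝ) 1 | u r = 0}.Finite ∧
      {r ∈ Ioo (0:ℝ) 1 | u r = 0}.ncard = k - 1)
    (hlamk1 : ∃ u u' : ℝ → ℝ, IsEigenfunc p N m lamk1 u u' ∧
      {r ∈ Ioo (0:ℝ) 1 | u r = 0}.Finite ∧
      {r ∈ Ioo (0:ℝ) 1 | u r = 0}.ncard = k)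
    (γ : ℝ) (hγ : 0 < γ)
    (hbetween : ∀ s : ℝ, s ≠ 0 →
      lamk < γ * f s / phi p s ∧ γ * f s / phi p s < lamk1) :
    ¬ ∃ u u' : ℝ → ℝ,
        (SolEq p N (fun t => γ * t ^ (N - 1) * m t * f (u t)) u u' ∧
          u' 0 = 0 ∧ u 1 = 0 ∧ ∃ r ∈ Icc (0:ℝ) 1, u r ≠ 0) ∧
        {r ∈ Ioo (0:ℝ) 1 | u r = 0}.Finite ∧
        ({r ∈ Ioo (0:ℝ) 1 | u r = 0}.ncard = k - 1 ∨
          {r ∈ Ioo (0:ℝ) 1 | u r = 0}.ncard = k) :=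
  nonexistence_between_eigenvalues_general p hp N m hm hmnonneg f hf k lamk lamk1 hlamkpos hlamk
    hlamk1 γ hbetween
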